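/- Let β : ℝ → ℝ be continuously differentiable on an open interval containing the range of a C¹ function t ↦ h(t) on [t₀, T), with β(h) ≥ 1/α₁(h) for a strictly increasing continuous α₁ : [0,∞) → [0,∞) with α₁(0)=0. Suppose there exist constants κ > 0 and M ≥ 0 such that for all t, the time derivative of β(h(t)) satisfies d/dt β(h(t)) ≤ −κ·|β'(h(t))|·( |β'(h(t))| − M ). If β(h(t)) is unbounded as t → T and |β'(h(t))| → ∞ as t → T, then there is a contradiction; hence β(h(t)) is bounded on [t₀, T). -/
import Mathlib


/-- comparison argument: let `y t = β (h t)` and `z t = β' (h t)`. If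
`ẏ ≤ -κ|z|(|z| - M)` on `[t₀,T)`, and unboundedness of `y` near `T` would force
`|z| → ∞` near `T`, then `y` is bounded on `[t₀,T)`. -/
theorem stmt_6 (t₀ T : ℝ) (hT : t₀ < T) (β h β' : ℝ → ℝ) (y z y' : ℝ → ℝ)
    (hy_def : ∀ t, y t = β (h t)) (hz_def : ∀ t, z t = β' (h t))
    (hy : ∀ t ∈ Set.Ico t₀ T, HasDerivAt y (y' t) t)
    (hy_cont : ContinuousOn y' (Set.Ico t₀ T))
    (κ M : ℝ) (hκ : 0 < κ) (hM : 0 ≤ M)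
    (hineq : ∀ t ∈ Set.Ico t₀ T, y' t ≤ -κ * |z t| * (|z t| - M))
    (hblow : (¬ ∃ B : ℝ, ∀ t ∈ Set.Ico t₀ T, y t ≤ B) →
      Filter.Tendsto (fun t => |z t|) (nhdsWithin T (Set.Ico t₀ T)) Filter.atTop) :
    ∃ B : ℝ, ∀ t ∈ Set.Ico t₀ T, y t ≤ B := by
  by_contra hcon
  have htend := hblow hcon
  have hev : ∀ᶠ t in nhdsWithin T (Set.Ico t₀ T), M + 1 ≤ |z t| :=
    htend.eventually_ge_atTop (M + 1)
  rw [Filter.Eventually, Metric.mem_nhdsWithin_iff] at hev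
  obtain ⟨ε, hε, hball⟩ := hev
  set t₁ : ℝ := max t₀ (T - ε / 2) with ht₁def
  have ht₀₁ : t₀ ≤ t₁ := le_max_left _ _
  have ht₁T : t₁ < T := by
    rcases max_cases t₀ (T - ε/2) with ⟨hc, _⟩ | ⟨hc, _⟩ <;> rw [ht₁def, hc] <;> linarith
  have hmem : ∀ t ∈ Set.Ico t₁ T, M + 1 ≤ |z t| := by
    intro t ht
    apply hball
    refine ⟨?_, le_trans ht₀₁ ht.1, ht.2⟩
    rw [Metric.mem_ball, Real.dist_eq, abs_sub_lt_iff]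
    have : T - ε / 2 ≤ t₁ := le_max_right _ _
    constructor <;> linarith [ht.1, ht.2]
  -- y is antitone on [t₁, T)
  have hsub : Set.Ico t₁ T ⊆ Set.Ico t₀ T := Set.Ico_subset_Ico_left ht₀₁
  have hanti : AntitoneOn y (Set.Ico t₁ T) := by
    apply antitoneOn_of_deriv_nonpos (convex_Ico _ _)
    · intro x hx
      exact ((hy x (hsub hx)).continuousAt).continuousWithinAt
    · intro x hx
      rw [interior_Ico] at hx
      have hx' : x ∈ Set.Ico t₁ T := ⟨le_of_lt hx.1, hx.2⟩
      exact ((hy x (hsub hx')).differentiableAt).differentiableWithinAt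
    · intro x hx
      rw [interior_Ico] at hx
      have hx' : x ∈ Set.Ico t₁ T := ⟨le_of_lt hx.1, hx.2⟩
      rw [(hy x (hsub hx')).deriv]
      have h1 := hmem x hx'
      have h2 := hineq x (hsub hx')
      have h3 : 0 ≤ κ * |z x| * (|z x| - M) :=
        mul_nonneg (mul_nonneg hκ.le (abs_nonneg _)) (by linarith)
      linarith
  -- y is continuous on [t₀, t₁], hence bounded there
  have hcont : ContinuousOn y (Set.Icc t₀ t₁) := by
    intro x hx
    exact ((hy x ⟨hx.1, lt_of_le_of_lt hx.2 ht₁T⟩).continuousAt).continuousWithinAt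
  obtain ⟨x₀, hx₀, hx₀max⟩ := (isCompact_Icc).exists_isMaxOn
    (Set.nonempty_Icc.mpr ht₀₁) hcont
  refine hcon ⟨max (y x₀) (y t₁), ?_⟩
  intro t ht
  by_cases hcase : t ≤ t₁
  · exact le_max_of_le_left (hx₀max ⟨ht.1, hcase⟩)
  · push_neg at hcase
    exact le_max_of_le_right
      (hanti ⟨le_refl t₁, ht₁T⟩ ⟨le_of_lt hcase, ht.2⟩ (le_of_lt hcase))
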